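/- arXiv:0711.2000 — 4 statements merged into one kernel-verified Lean document; each statement's English description precedes it below -/
import Mathlib

section
/- If g ∈ L^∞(ℝ,X) has empty circular spectrum, σ(g) = ∅, then g = 0. -/
/-!
Off the unit circle `λ ↦ R(λ,S) g` is holomorphic, since `S` and `S⁻¹` are isometries and
hence `σ(S)` lies on the circle. An empty circular spectrum means it also extends
holomorphically across every point of the circle; as the circle has empty interior, these local
extensions glue (by continuity from outside the circle) to an entire function. The resolvent
tends to `0` at infinity, so by Liouville this entire function vanishes, and `R(λ,S)` is
injective, whence `g = 0`.
-/

open MeasureTheory Complex Metric BoundedContinuousFunction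

noncomputable section

/-- The space `L^∞(ℝ, X)` of (classes of) essentially bounded strongly measurable functions. -/
abbrev Linf (X : Type*) [NormedAddCommGroup X] : Type _ := Lp X ⊤ (volume : Measure ℝ)

variable (X : Type*) [NormedAddCommGroup X] [NormedSpace ℂ X] [CompleteSpace X]

/-- The translation operator `S` on `L^∞(ℝ,X)`, `(S g)(t) = g (t + 1)`. -/
def transOp : Linf X →L[ℂ] Linf X :=
  (Lp.compMeasurePreservingₗᵢ ℂ (fun t : ℝ => t + 1)
    (measurePreserving_add_right volume 1)).toContinuousLinearMap

/-- The circular spectrum of `g ∈ L^∞(ℝ,X)`: the set of points `ξ₀` of the unit circle `Γ`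
such that `λ ↦ R(λ,S) g` admits no analytic extension to any neighborhood of `ξ₀`. -/
def circSpec (g : Linf X) : Set ℂ :=
  {ξ | ‖ξ‖ = 1 ∧ ¬∃ (U : Set ℂ) (F : ℂ → Linf X), IsOpen U ∧ ξ ∈ U ∧
    AnalyticOnNhd ℂ F U ∧ ∀ lam ∈ U, ‖lam‖ ≠ 1 → F lam = resolvent (transOp X) lam g}

/-- A bounded continuous function, viewed as an element of `L^∞(ℝ,X)`. -/
def bcToLinf (f : ℝ →ᵇ X) : Linf X :=
  (memLp_top_of_bound f.continuous.aestronglyMeasurable ‖f‖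
    (Filter.Eventually.of_forall fun t => f.norm_coe_le_norm t)).toLp f

/-- Restriction of a continuous linear operator to an invariant submodule. -/
def restrictCLM {E : Type*} [NormedAddCommGroup E] [NormedSpace ℂ E]
    (f : E →L[ℂ] E) (p : Submodule ℂ E) (h : ∀ x ∈ p, f x ∈ p) : p →L[ℂ] p where
  toFun x := ⟨f x, h x x.2⟩
  map_add' x y := by ext; simp
  map_smul' c x := by ext; simp
  cont := Continuous.subtype_mk (f.continuous.comp continuous_subtype_val) _

/-- The translation operator `S` on `BC(ℝ,X)`, `(S g)(t) = g (t + 1)`. -/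
def transBC : (ℝ →ᵇ X) →L[ℂ] (ℝ →ᵇ X) :=
  LinearMap.mkContinuous
    { toFun := fun g => g.compContinuous ⟨fun t => t + 1, by continuity⟩
      map_add' := fun g h => by ext t; simp
      map_smul' := fun c g => by ext t; simp }
    1 (fun g => by
      simpa using g.norm_compContinuous_le ⟨fun t => t + 1, by continuity⟩)

/-- The translation `S(τ)` on `BC(ℝ,X)`, `(S(τ) g)(t) = g (t + τ)`. -/
def translateBC (τ : ℝ) (g : ℝ →ᵇ X) : ℝ →ᵇ X :=
  g.compContinuous ⟨fun t => t + τ, by continuity⟩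

/-- A 1-periodic strongly continuous evolutionary process on `X`. -/
structure EvolProcess (X : Type*) [NormedAddCommGroup X] [NormedSpace ℂ X] where
  U : ℝ → ℝ → X →L[ℂ] X
  idem : ∀ t : ℝ, U t t = ContinuousLinearMap.id ℂ X
  comp : ∀ r s t : ℝ, r ≤ s → s ≤ t → (U t s).comp (U s r) = U t r
  strongCont : ∀ x : X, ContinuousOn (fun p : ℝ × ℝ => U p.1 p.2 x) {p : ℝ × ℝ | p.2 ≤ p.1}
  periodic : ∀ t s : ℝ, U (t + 1) (s + 1) = U t s
  bound : ∃ N ω : ℝ, 0 < N ∧ 0 < ω ∧ ∀ t s : ℝ, s ≤ t → ‖U t s‖ ≤ N * Real.exp (ω * (t - s))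

open Filter Set Topology

section Extension

variable {𝕜 : Type*} [NontriviallyNormedField 𝕜]
  {E : Type*} [NormedAddCommGroup E] [NormedSpace 𝕜 E]
  {F : Type*} [NormedAddCommGroup F] [NormedSpace 𝕜 F]

theorem exists_differentiable_eqOn_compl_of_locally {s : Set E} (hs : interior s = ∅)
    {f : E → F} (hloc : ∀ ξ, ∃ U : Set E, ∃ G : E → F, IsOpen U ∧ ξ ∈ U ∧
      DifferentiableOn 𝕜 G U ∧ EqOn G f (U \ s)) :
    ∃ G : E → F, Differentiable 𝕜 G ∧ EqOn G f sᶜ := by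
  choose U G hUopen hmemU hGdiff hGf using hloc
  have hdense : Dense sᶜ := interior_eq_empty_iff_dense_compl.mp hs
  have hglue : ∀ ξ, ∀ z ∈ U ξ, limUnder (𝓝[sᶜ] z) f = G ξ z := by
    intro ξ z hz
    have : (𝓝[sᶜ] z).NeBot := mem_closure_iff_nhdsWithin_neBot.mp (hdense z)
    have hGz : ContinuousAt (G ξ) z :=
      (hGdiff ξ).continuousOn.continuousAt ((hUopen ξ).mem_nhds hz)
    refine Tendsto.limUnder_eq (tendsto_nhdsWithin_of_tendsto_nhds hGz |>.congr' ?_)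
    filter_upwards [inter_mem_nhdsWithin sᶜ ((hUopen ξ).mem_nhds hz)] with w hw
      using hGf ξ ⟨hw.2, hw.1⟩
  refine ⟨fun z => limUnder (𝓝[sᶜ] z) f, fun ξ => ?_, fun z hz => ?_⟩
  · have hEq : (fun z => limUnder (𝓝[sᶜ] z) f) =ᶠ[𝓝 ξ] G ξ :=
      eventually_of_mem ((hUopen ξ).mem_nhds (hmemU ξ)) (hglue ξ)
    exact hEq.differentiableAt_iff.mpr
      ((hGdiff ξ).differentiableAt ((hUopen ξ).mem_nhds (hmemU ξ)))
  · exact (hglue z z (hmemU z)).trans (hGf z ⟨hmemU z, hz⟩)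

end Extension

section Spectrum

variable {𝕜 : Type*} [NormedField 𝕜] {A : Type*} [NormedRing A] [NormedAlgebra 𝕜 A]
  [CompleteSpace A] [NormOneClass A]

theorem spectrum_subset_sphere_of_norm_le_one (u : Aˣ) (hu : ‖(u : A)‖ ≤ 1)
    (hu_inv : ‖(↑u⁻¹ : A)‖ ≤ 1) : spectrum 𝕜 (u : A) ⊆ sphere (0 : 𝕜) 1 := by
  intro k hk
  have hk0 : k ≠ 0 := spectrum.ne_zero_of_mem_of_unit hk
  have hk_inv : (↑(Units.mk0 k hk0)⁻¹ : 𝕜) ∈ spectrum 𝕜 (↑u⁻¹ : A) :=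
    spectrum.inv_mem_iff.mp hk
  have hle : ‖k‖ ≤ 1 := (spectrum.norm_le_norm_of_mem hk).trans hu
  have hge : ‖k⁻¹‖ ≤ 1 := (spectrum.norm_le_norm_of_mem hk_inv).trans hu_inv
  rw [norm_inv, inv_le_one₀ (norm_pos_iff.mpr hk0)] at hge
  simpa using le_antisymm hle hge

end Spectrum

section Translation

variable {𝕜 : Type*} [NontriviallyNormedField 𝕜]
  {E : Type*} [NormedAddCommGroup E] [NormedSpace 𝕜 E] {p : ENNReal} [Fact (1 ≤ p)]

variable (𝕜 E p) in
def translateLp (a : ℝ) :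
    Lp E p (volume : Measure ℝ) →L[𝕜] Lp E p (volume : Measure ℝ) :=
  (Lp.compMeasurePreservingₗᵢ 𝕜 (fun t : ℝ => t + a)
    (measurePreserving_add_right volume a)).toContinuousLinearMap

theorem translateLp_zero : translateLp 𝕜 E p 0 = 1 := by
  ext1 u
  change Lp.compMeasurePreserving _ _ u = u
  convert Lp.compMeasurePreserving_id_apply u using 3
  exact funext (add_zero (M := ℝ))

theorem translateLp_add (a b : ℝ) :
    translateLp 𝕜 E p (a + b) = translateLp 𝕜 E p a * translateLp 𝕜 E p b := by
  ext1 u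
  change Lp.compMeasurePreserving _ _ u = _
  convert Lp.compMeasurePreserving_comp_apply u (measurePreserving_add_right volume b)
    (measurePreserving_add_right volume a) using 3
  · exact funext fun t => (add_assoc t a b).symm
  · rfl

variable (𝕜 E p) in
def translateLpUnit (a : ℝ) :
    (Lp E p (volume : Measure ℝ) →L[𝕜] Lp E p (volume : Measure ℝ))ˣ where
  val := translateLp 𝕜 E p a
  inv := translateLp 𝕜 E p (-a)
  val_inv := by rw [← translateLp_add, add_neg_cancel, translateLp_zero]
  inv_val := by rw [← translateLp_add, neg_add_cancel, translateLp_zero]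

theorem norm_translateLp_le (a : ℝ) : ‖translateLp 𝕜 E p a‖ ≤ 1 :=
  LinearIsometry.norm_toContinuousLinearMap_le _

theorem spectrum_translateLp_subset_sphere [CompleteSpace E]
    [Nontrivial (Lp E p (volume : Measure ℝ))] (a : ℝ) :
    spectrum 𝕜 (translateLp 𝕜 E p a) ⊆ sphere (0 : 𝕜) 1 :=
  spectrum_subset_sphere_of_norm_le_one (translateLpUnit 𝕜 E p a)
    (norm_translateLp_le a) (norm_translateLp_le (-a))

end Translation

section Resolvent

variable {𝕜 : Type*} [NontriviallyNormedField 𝕜]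
  {E : Type*} [NormedAddCommGroup E] [NormedSpace 𝕜 E] (a : E →L[𝕜] E) (x : E)

theorem differentiableOn_resolvent_apply [CompleteSpace E] :
    DifferentiableOn 𝕜 (fun z => resolvent a z x) (resolventSet 𝕜 a) := fun _ hz =>
  ((spectrum.hasDerivAt_resolvent_const_left hz).differentiableAt.clm_apply
    (differentiableAt_const x)).differentiableWithinAt

theorem tendsto_resolvent_apply_cobounded [CompleteSpace E] :
    Tendsto (fun z => resolvent a z x) (Bornology.cobounded 𝕜) (𝓝 0) := by
  simpa [Function.comp_def] using ((ContinuousLinearMap.apply 𝕜 E x).continuous.tendsto 0).comp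
    (spectrum.resolvent_tendsto_cobounded a)

theorem resolvent_apply_eq_zero_iff {a : E →L[𝕜] E} {x : E} {z : 𝕜}
    (hz : z ∈ resolventSet 𝕜 a) : resolvent a z x = 0 ↔ x = 0 := by
  obtain ⟨u, hu⟩ := spectrum.isUnit_resolvent.mp hz
  rw [← hu]
  exact (ContinuousLinearEquiv.unitsEquiv 𝕜 E u).map_eq_zero_iff

end Resolvent

theorem mem_resolventSet_transOp [Nontrivial (Linf X)] {z : ℂ} (hz : ‖z‖ ≠ 1) :
    z ∈ resolventSet ℂ (transOp X) := spectrum.notMem_iff.mp fun hmem =>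
  hz (mem_sphere_zero_iff_norm.mp (spectrum_translateLp_subset_sphere (E := X) (p := ⊤) 1 hmem))

theorem exists_differentiable_eqOn_resolvent_of_circSpec_eq_empty [Nontrivial (Linf X)]
    {g : Linf X} (h : circSpec X g = ∅) : ∃ G : ℂ → Linf X, Differentiable ℂ G ∧
      EqOn G (fun z => resolvent (transOp X) z g) (sphere 0 1)ᶜ := by
  refine exists_differentiable_eqOn_compl_of_locally (interior_sphere 0 one_ne_zero) fun ξ => ?_
  by_cases hξ : ‖ξ‖ = 1
  · have : ξ ∉ circSpec X g := h ▸ notMem_empty ξ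
    simp only [circSpec, mem_ofPred_eq, hξ, true_and, not_not] at this
    obtain ⟨U, F, hU, hξU, hF, hFR⟩ := this
    exact ⟨U, F, hU, hξU, hF.differentiableOn, fun z hz => hFR z hz.1 (by simpa using hz.2)⟩
  · exact ⟨resolventSet ℂ (transOp X), _, spectrum.isOpen_resolventSet _,
      mem_resolventSet_transOp X hξ, differentiableOn_resolvent_apply _ g, eqOn_refl _ _⟩

/-- if `g ∈ L^∞(ℝ,X)` has empty circular spectrum then `g = 0`. -/
theorem stmt5 (g : Linf X) (h : circSpec X g = ∅) : g = 0 := by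
  -- nontriviality gives `‖1‖ = 1` in the operator algebra, which the spectral bounds need
  rcases subsingleton_or_nontrivial (Linf X) with _ | _
  · exact Subsingleton.elim g 0
  obtain ⟨G, hG, hGR⟩ := exists_differentiable_eqOn_resolvent_of_circSpec_eq_empty X h
  have hG0 : Tendsto G (cocompact ℂ) (𝓝 0) := by
    rw [← Metric.cobounded_eq_cocompact]
    refine (tendsto_resolvent_apply_cobounded (transOp X) g).congr' ?_
    filter_upwards [tendsto_norm_cobounded_atTop.eventually_gt_atTop 1] with z hz
    exact (hGR (by simpa using hz.ne')).symm
  rw [← resolvent_apply_eq_zero_iff (mem_resolventSet_transOp X (z := 2) (by norm_num))]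
  exact (hGR (by simp)).symm.trans (hG.apply_eq_of_tendsto_cocompact 2 hG0)
end
end

section
/- Let B : ℝ → L(X) be a family of bounded linear operators with B(t+1) = B(t) for all t and t ↦ B(t)x continuous for each x ∈ X, and let 𝓑 denote the bounded operator of multiplication by B(t) on BC(ℝ,X), (𝓑g)(t) = B(t)g(t). Suppose u, f ∈ BC(ℝ,X) satisfy the difference equation u(t) = B(t)u(t−1) + f(t) for all t ∈ ℝ. Then the circular spectrum of u satisfies σ(u) ⊂ (σ(𝓑) ∩ Γ) ∪ σ(f), where σ(𝓑) is the spectrum of 𝓑 as an operator on BC(ℝ,X). -/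
open MeasureTheory Complex Metric BoundedContinuousFunction

noncomputable section

variable (X : Type*) [NormedAddCommGroup X] [NormedSpace ℂ X] [CompleteSpace X]

/-!
Writing `S` for the translation on `BC(ℝ,X)`, periodicity of `B` makes `𝓑` commute with `S`, and the
difference equation reads `S u = 𝓑 u + S f`. For `|λ| ≠ 1` and `λ ∉ σ(𝓑)` this gives the identity
`R(λ,S) u = R(λ,𝓑) (u - f + λ R(λ,S) f)`. Near a point `ξ ∈ Γ \ σ(f)` the function `λ ↦ R(λ,S) f` has
an analytic `L^∞`-valued extension. Off `Γ` it takes values in `BC(ℝ,X)`, which is closed in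
`L^∞(ℝ,X)`, so by continuity it does so everywhere and is analytic as a `BC(ℝ,X)`-valued function.
Substituting it into the right-hand side extends `λ ↦ R(λ,S) u` analytically near `ξ` when
`ξ ∉ σ(𝓑)`.
-/

open Set Filter Topology

section Resolvent
variable {𝕜 E F : Type*} [NontriviallyNormedField 𝕜] [NormedAddCommGroup E] [NormedSpace 𝕜 E]
  [NormedAddCommGroup F] [NormedSpace 𝕜 F] {T : E →L[𝕜] E} {k : 𝕜}

theorem resolvent_apply_sub_apply (hk : k ∈ resolventSet 𝕜 T) (x : E) :
    resolvent T k (k • x - T x) = x := by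
  simpa [resolvent] using congrArg (· x) (Ring.inverse_mul_cancel _ hk)

theorem sub_apply_resolvent_apply (hk : k ∈ resolventSet 𝕜 T) (x : E) :
    k • resolvent T k x - T (resolvent T k x) = x := by
  simpa [resolvent] using congrArg (· x) (Ring.mul_inverse_cancel _ hk)

theorem map_resolvent_apply_of_comp_eq (ι : E →L[𝕜] F) {T' : F →L[𝕜] F} (h : ι ∘L T = T' ∘L ι)
    (hk : k ∈ resolventSet 𝕜 T) (hk' : k ∈ resolventSet 𝕜 T') (x : E) :
    ι (resolvent T k x) = resolvent T' k (ι x) := by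
  have hι : ∀ y, ι (T y) = T' (ι y) := fun y => congrArg (· y) h
  conv_rhs => rw [← sub_apply_resolvent_apply hk x, map_sub, map_smul, hι,
    resolvent_apply_sub_apply hk']

theorem resolvent_apply_eq_of_commute {A : E →L[𝕜] E} (hTA : Commute T A)
    (hT : k ∈ resolventSet 𝕜 T) (hA : k ∈ resolventSet 𝕜 A) {u f : E}
    (huf : T u = A u + T f) :
    resolvent T k u = resolvent A k (u - f + k • resolvent T k f) := by
  have hAR : Commute A (resolvent T k) := by
    rw [resolvent, Ring.inverse_of_isUnit hT]
    refine Commute.units_inv_right ?_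
    rw [hT.unit_spec]
    exact (Algebra.commute_algebraMap_right k A).sub_right hTA.symm
  have hRT : resolvent T k (T f) = k • resolvent T k f - f := by
    have h := resolvent_apply_sub_apply hT f
    rw [map_sub, map_smul] at h
    exact eq_sub_of_add_eq (sub_eq_iff_eq_add'.1 h).symm
  calc resolvent T k u
      = resolvent A k (k • resolvent T k u - A (resolvent T k u)) :=
        (resolvent_apply_sub_apply hA _).symm
    _ = resolvent A k (resolvent T k (k • u - A u)) := by
        rw [map_sub (resolvent T k), map_smul]
        congr 2
        exact congrArg (· u) hAR.eq
    _ = resolvent A k (resolvent T k (k • u - T u) + resolvent T k (T f)) := by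
        rw [← map_add, huf]; congr 2; abel
    _ = resolvent A k (u - f + k • resolvent T k f) := by
        rw [resolvent_apply_sub_apply hT, hRT]; congr 1; abel

end Resolvent

section Spectrum
variable {𝕜 A : Type*} [NontriviallyNormedField 𝕜] [NormedRing A] [NormedAlgebra 𝕜 A]
  [CompleteSpace A]

theorem spectrum.norm_le_norm_mul_norm_one_of_mem {a : A} {k : 𝕜} (hk : k ∈ spectrum 𝕜 a) :
    ‖k‖ ≤ ‖a‖ * ‖(1 : A)‖ :=
  not_lt.1 fun h => hk (spectrum.mem_resolventSet_of_norm_lt_mul h)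

-- `‖1‖ ≤ 1` instead of `NormOneClass A`, so that operators on the zero space are covered.
theorem Units.spectrum_subset_sphere (a : Aˣ) (ha : ‖(a : A)‖ ≤ 1) (ha' : ‖(↑a⁻¹ : A)‖ ≤ 1)
    (h1 : ‖(1 : A)‖ ≤ 1) : spectrum 𝕜 (a : A) ⊆ sphere 0 1 := by
  intro k hk
  have hk0 : k ≠ 0 := fun h => spectrum.zero_notMem 𝕜 a.isUnit (h ▸ hk)
  have hle (b : A) (hb : ‖b‖ ≤ 1) {r : 𝕜} (hr : r ∈ spectrum 𝕜 b) : ‖r‖ ≤ 1 :=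
    (spectrum.norm_le_norm_mul_norm_one_of_mem hr).trans (mul_le_one₀ hb (norm_nonneg _) h1)
  have hinv : k⁻¹ ∈ spectrum 𝕜 (↑a⁻¹ : A) := spectrum.inv_mem_iff (r := Units.mk0 k hk0) |>.1 hk
  rw [mem_sphere_zero_iff_norm]
  refine le_antisymm (hle _ ha hk) ?_
  have h := hle _ ha' hinv
  rwa [norm_inv, inv_le_one₀ (norm_pos_iff.2 hk0)] at h

theorem LinearIsometryEquiv.mem_resolventSet_of_norm_ne_one {E : Type*} [NormedAddCommGroup E]
    [NormedSpace 𝕜 E] [CompleteSpace E] (e : E ≃ₗᵢ[𝕜] E) {k : 𝕜} (hk : ‖k‖ ≠ 1) :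
    k ∈ resolventSet 𝕜 (e : E →L[𝕜] E) := spectrum.notMem_iff.1 fun hmem =>
  hk <| mem_sphere_zero_iff_norm.1 <|
    e.toContinuousLinearEquiv.toUnit.spectrum_subset_sphere
      e.toLinearIsometry.norm_toContinuousLinearMap_le
      e.symm.toLinearIsometry.norm_toContinuousLinearMap_le ContinuousLinearMap.norm_id_le hmem

end Spectrum

section Lift
variable {E F : Type*} [NormedAddCommGroup E] [NormedSpace ℂ E] [CompleteSpace E]
  [NormedAddCommGroup F] [NormedSpace ℂ F]

theorem ContinuousOn.mapsTo_of_dense_of_isClosed {α β : Type*} [TopologicalSpace α]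
    [TopologicalSpace β] {f : α → β} {U D : Set α} {C : Set β} (hf : ContinuousOn f U)
    (hU : IsOpen U) (hD : Dense D) (hC : IsClosed C) (hfC : MapsTo f (U ∩ D) C) :
    MapsTo f U C := fun _ hz =>
  hC.closure_subset_iff.2 (mapsTo_iff_image_subset.1 hfC)
    (mem_closure_image (hf.continuousAt (hU.mem_nhds hz)) (hD.open_subset_closure_inter hU hz))

theorem AnalyticOnNhd.exists_lift_of_mapsTo_range (e : E →ₗᵢ[ℂ] F) {U : Set ℂ} (hU : IsOpen U)
    {Φ : ℂ → F} (hΦ : AnalyticOnNhd ℂ Φ U) (hrange : MapsTo Φ U (range e)) :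
    ∃ G : ℂ → E, AnalyticOnNhd ℂ G U ∧ ∀ z ∈ U, e (G z) = Φ z := by
  set G : ℂ → E := Function.invFun e ∘ Φ
  have heG : ∀ z ∈ U, e (G z) = Φ z := fun z hz => Function.invFun_eq (hrange hz)
  refine ⟨G, DifferentiableOn.analyticOnNhd (fun z hz => ?_) hU, heG⟩
  -- `e` maps the slopes of `G` isometrically onto the convergent slopes of `Φ`; `E` is complete.
  have hslope : e ∘ slope G z =ᶠ[𝓝[≠] z] slope Φ z := by
    filter_upwards [nhdsWithin_le_nhds (hU.mem_nhds hz)] with w hw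
    simp only [Function.comp_apply, slope_def_module, map_smul, map_sub, heG w hw, heG z hz]
  have hcauchy : Cauchy (map (slope G z) (𝓝[≠] z)) := by
    rw [← e.isometry.isUniformInducing.cauchy_map_iff, map_map, map_congr hslope]
    exact (hasDerivAt_iff_tendsto_slope.1 (hΦ z hz).differentiableAt.hasDerivAt).cauchy_map
  obtain ⟨d, hd⟩ := cauchy_map_iff_exists_tendsto.1 hcauchy
  exact (hasDerivAt_iff_tendsto_slope.2 hd).differentiableAt.differentiableWithinAt

end Lift

theorem BoundedContinuousFunction.eLpNormEssSup_eq_enorm {α β : Type*} [TopologicalSpace α]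
    [MeasurableSpace α] (μ : Measure α) [μ.IsOpenPosMeasure] [SeminormedAddCommGroup β]
    (g : α →ᵇ β) : eLpNormEssSup g μ = ‖g‖ₑ := by
  rw [enorm_eq_iSup_enorm]
  refine le_antisymm (eLpNormEssSup_le_of_ae_enorm_bound (ae_of_all _ (le_iSup (‖g ·‖ₑ))))
    (iSup_le fun t => ?_)
  have hdense := Measure.dense_of_ae (enorm_ae_le_eLpNormEssSup g μ)
  exact (isClosed_le (by fun_prop) continuous_const).closure_subset
    (hdense.closure_eq ▸ mem_univ t)

section Translations
variable {E : Type*} [NormedAddCommGroup E]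

theorem norm_bcToLinf (g : ℝ →ᵇ E) : ‖bcToLinf E g‖ = ‖g‖ := by
  rw [bcToLinf, Lp.norm_toLp, eLpNorm_exponent_top, g.eLpNormEssSup_eq_enorm volume, toReal_enorm]

theorem norm_translateBC_le (τ : ℝ) (g : ℝ →ᵇ E) : ‖translateBC E τ g‖ ≤ ‖g‖ :=
  g.norm_compContinuous_le _

variable [NormedSpace ℂ E]

variable (E) in
def bcToLinfₗᵢ : (ℝ →ᵇ E) →ₗᵢ[ℂ] Linf E where
  toFun := bcToLinf E
  map_add' _ _ := MemLp.toLp_add _ _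
  map_smul' c _ := MemLp.toLp_const_smul c _
  norm_map' := norm_bcToLinf

variable (E) in
def translateBCₗᵢ (τ : ℝ) : (ℝ →ᵇ E) ≃ₗᵢ[ℂ] (ℝ →ᵇ E) :=
  LinearIsometryEquiv.ofBounds
    { toFun := translateBC E τ
      invFun := translateBC E (-τ)
      map_add' _ _ := rfl
      map_smul' _ _ := rfl
      left_inv g := by ext t; simp [translateBC]
      right_inv g := by ext t; simp [translateBC] }
    (norm_translateBC_le τ) (norm_translateBC_le (-τ))

variable (E) in
def translateLinfₗᵢ (τ : ℝ) : Linf E ≃ₗᵢ[ℂ] Linf E :=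
  LinearIsometryEquiv.ofSurjective
    (Lp.compMeasurePreservingₗᵢ ℂ (· + τ) (measurePreserving_add_right volume τ))
    fun g => ⟨Lp.compMeasurePreserving (· + -τ) (measurePreserving_add_right volume (-τ)) g, by
      change Lp.compMeasurePreserving _ _ _ = g
      rw [← Lp.compMeasurePreserving_comp_apply]
      convert Lp.compMeasurePreserving_id_apply g
      ext t; simp⟩

theorem bcToLinf_translateBC (τ : ℝ) (g : ℝ →ᵇ E) :
    bcToLinf E (translateBC E τ g) = translateLinfₗᵢ E τ (bcToLinf E g) :=
  (Lp.toLp_compMeasurePreserving _ (measurePreserving_add_right volume τ)).symm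

variable [CompleteSpace E] {k : ℂ}

theorem mem_resolventSet_transBC (hk : ‖k‖ ≠ 1) : k ∈ resolventSet ℂ (transBC E) :=
  (translateBCₗᵢ E 1).mem_resolventSet_of_norm_ne_one hk

theorem mem_resolventSet_transOp_s9 (hk : ‖k‖ ≠ 1) : k ∈ resolventSet ℂ (transOp E) :=
  (translateLinfₗᵢ E 1).mem_resolventSet_of_norm_ne_one hk

theorem bcToLinf_resolvent_transBC (hk : ‖k‖ ≠ 1) (g : ℝ →ᵇ E) :
    bcToLinf E (resolvent (transBC E) k g) = resolvent (transOp E) k (bcToLinf E g) :=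
  map_resolvent_apply_of_comp_eq (bcToLinfₗᵢ E).toContinuousLinearMap
    (ContinuousLinearMap.ext (bcToLinf_translateBC 1)) (mem_resolventSet_transBC hk)
    (mem_resolventSet_transOp_s9 hk) g

end Translations

theorem exists_analyticOnNhd_resolvent_of_transBC_eq {E : Type*} [NormedAddCommGroup E]
    [NormedSpace ℂ E] [CompleteSpace E] {𝓑 : (ℝ →ᵇ E) →L[ℂ] (ℝ →ᵇ E)}
    (hcomm : Commute (transBC E) 𝓑) {u f : ℝ →ᵇ E} (huf : transBC E u = 𝓑 u + transBC E f)
    {U : Set ℂ} (hU : IsOpen U) {Φ : ℂ → Linf E} (hΦ : AnalyticOnNhd ℂ Φ U)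
    (hΦf : ∀ k ∈ U, ‖k‖ ≠ 1 → Φ k = resolvent (transOp E) k (bcToLinf E f)) :
    ∃ F : ℂ → Linf E, AnalyticOnNhd ℂ F (U ∩ resolventSet ℂ 𝓑) ∧
      ∀ k ∈ U ∩ resolventSet ℂ 𝓑, ‖k‖ ≠ 1 → F k = resolvent (transOp E) k (bcToLinf E u) := by
  have hrange : MapsTo Φ U (range (bcToLinfₗᵢ E)) := by
    refine hΦ.continuousOn.mapsTo_of_dense_of_isClosed hU
      (interior_eq_empty_iff_dense_compl.1 (interior_sphere 0 one_ne_zero))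
      (bcToLinfₗᵢ E).isometry.isClosedEmbedding.isClosed_range fun k ⟨hkU, hk⟩ => ?_
    rw [mem_compl_iff, mem_sphere_zero_iff_norm] at hk
    exact ⟨_, (bcToLinf_resolvent_transBC hk f).trans (hΦf k hkU hk).symm⟩
  obtain ⟨G, hG, hGΦ⟩ := hΦ.exists_lift_of_mapsTo_range (bcToLinfₗᵢ E) hU hrange
  set ι := (bcToLinfₗᵢ E).toContinuousLinearMap
  refine ⟨fun k => ι (resolvent 𝓑 k (u - f + k • G k)),
    DifferentiableOn.analyticOnNhd (fun k hk => ?_) (hU.inter (spectrum.isOpen_resolventSet 𝓑)),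
    fun k ⟨hkU, hkB⟩ hk => ?_⟩
  · have hR := (spectrum.hasDerivAt_resolvent_const_left hk.2).differentiableAt
    have hv : DifferentiableAt ℂ (fun k : ℂ => u - f + k • G k) k :=
      (differentiableAt_const _).add (differentiableAt_id.smul (hG k hk.1).differentiableAt)
    exact (ι.differentiableAt.comp k (hR.clm_apply hv)).differentiableWithinAt
  · have hGk : G k = resolvent (transBC E) k f :=
      (bcToLinfₗᵢ E).injective <| by
        rw [hGΦ k hkU, hΦf k hkU hk]
        exact (bcToLinf_resolvent_transBC hk f).symm
    dsimp only
    rw [hGk, ← resolvent_apply_eq_of_commute hcomm (mem_resolventSet_transBC hk) hkB huf]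
    exact bcToLinf_resolvent_transBC hk u

theorem stmt9 (B : ℝ → X →L[ℂ] X) (hBper : ∀ t : ℝ, B (t + 1) = B t)
    (𝓑 : (ℝ →ᵇ X) →L[ℂ] (ℝ →ᵇ X)) (h𝓑 : ∀ (g : ℝ →ᵇ X) (t : ℝ), 𝓑 g t = B t (g t))
    (u f : ℝ →ᵇ X) (hu : ∀ t : ℝ, u t = B t (u (t - 1)) + f t) :
    circSpec X (bcToLinf X u) ⊆
      (spectrum ℂ 𝓑 ∩ Metric.sphere (0 : ℂ) 1) ∪ circSpec X (bcToLinf X f) := by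
  have hcomm : Commute (transBC X) 𝓑 := by
    ext g t
    change 𝓑 g (t + 1) = 𝓑 (transBC X g) t
    rw [h𝓑, h𝓑, hBper]
    rfl
  have huf : transBC X u = 𝓑 u + transBC X f := by
    ext t
    change u (t + 1) = 𝓑 u t + f (t + 1)
    rw [h𝓑, hu, hBper, add_sub_cancel_right]
  rintro ξ ⟨hξ, hξu⟩
  by_contra hξ'
  simp only [mem_union, mem_inter_iff, mem_sphere_zero_iff_norm, hξ, and_true, not_or] at hξ'
  obtain ⟨hξB, hξf⟩ := hξ'
  obtain ⟨U, Φ, hU, hξU, hΦ, hΦf⟩ := not_not.1 (hξf ∘ And.intro hξ)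
  obtain ⟨F, hF, hFu⟩ := exists_analyticOnNhd_resolvent_of_transBC_eq hcomm huf hU hΦ hΦf
  exact hξu ⟨_, F, hU.inter (spectrum.isOpen_resolventSet 𝓑), ⟨hξU, spectrum.notMem_iff.1 hξB⟩, hF, hFu⟩

end
end

section
/- Let B : ℝ → L(X) be a family of bounded linear operators with B(t+1) = B(t) for all t and t ↦ B(t)x continuous for each x ∈ X, let 𝓑 denote the bounded operator of multiplication by B(t) on BC(ℝ,X), and let f ∈ BC(ℝ,X). If (σ(𝓑) ∩ Γ) ∩ σ(f) = ∅, then the difference equation u(t) = B(t)u(t−1) + f(t) (t ∈ ℝ) has at most one solution u ∈ BC(ℝ,X) with σ(u) ⊂ σ(f). -/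
open MeasureTheory Complex Metric BoundedContinuousFunction

noncomputable section

variable (X : Type*) [NormedAddCommGroup X] [NormedSpace ℂ X] [CompleteSpace X]

/-!
The difference `w = u - v` satisfies `w(t) = B(t) w(t-1)`, i.e. `S w = 𝓑 w`, and `S` commutes
with `𝓑` since `B` is 1-periodic. Hence for `λ ∉ σ(𝓑)` also `y = R(λ,𝓑) w` satisfies `S y = 𝓑 y`,
so `(λ - S) y = w`: the function `λ ↦ R(λ,𝓑) w` continues `λ ↦ R(λ,S) w` holomorphically across
`Γ ∖ σ(𝓑)`. Across `Γ ∩ σ(𝓑)`, which misses `σ(f) ⊇ σ(u) ∪ σ(v)`, the continuations for `u` and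
`v` are subtracted. As `Γ` has empty interior, these local continuations glue to an entire
function which equals the resolvent off `Γ` and so tends to `0` at infinity; by Liouville it is
zero, hence `w = 0`.
-/

section ResolventExtension

variable {E : Type*} [NormedAddCommGroup E] [NormedSpace ℂ E]

open Set Filter Topology

def IsResolventExtension (T : E →L[ℂ] E) (K : Set ℂ) (g : E) (U : Set ℂ) (F : ℂ → E) : Prop :=
  IsOpen U ∧ AnalyticOnNhd ℂ F U ∧ ∀ lam ∈ U, lam ∉ K → F lam = resolvent T lam g

variable {T : E →L[ℂ] E} {K : Set ℂ} {g h : E} {U₁ U₂ : Set ℂ} {F₁ F₂ : ℂ → E}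

theorem isResolventExtension_resolventSet [CompleteSpace E] (T : E →L[ℂ] E) (K : Set ℂ) (g : E) :
    IsResolventExtension T K g (resolventSet ℂ T) (fun lam => resolvent T lam g) := by
  refine ⟨spectrum.isOpen_resolventSet T, ?_, fun _ _ _ => rfl⟩
  refine DifferentiableOn.analyticOnNhd (fun z hz => ?_) (spectrum.isOpen_resolventSet T)
  exact ((spectrum.hasDerivAt_resolvent_const_left hz).clm_apply
    (hasDerivAt_const z g)).differentiableAt.differentiableWithinAt

theorem IsResolventExtension.sub (h₁ : IsResolventExtension T K g U₁ F₁)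
    (h₂ : IsResolventExtension T K h U₂ F₂) :
    IsResolventExtension T K (g - h) (U₁ ∩ U₂) (F₁ - F₂) := by
  refine ⟨h₁.1.inter h₂.1, (h₁.2.1.mono inter_subset_left).sub (h₂.2.1.mono inter_subset_right),
    fun lam hlam hK => ?_⟩
  simp only [Pi.sub_apply, h₁.2.2 lam hlam.1 hK, h₂.2.2 lam hlam.2 hK, map_sub]

/-- `U₁ ∩ U₂ \ K` is dense in `U₁ ∩ U₂` because `K` has empty interior. -/
theorem IsResolventExtension.eqOn (hK : interior K = ∅) (h₁ : IsResolventExtension T K g U₁ F₁)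
    (h₂ : IsResolventExtension T K g U₂ F₂) : EqOn F₁ F₂ (U₁ ∩ U₂) := by
  refine EqOn.of_subset_closure (s := U₁ ∩ U₂ ∩ Kᶜ) ?_
    (h₁.2.1.continuousOn.mono inter_subset_left) (h₂.2.1.continuousOn.mono inter_subset_right)
    inter_subset_left
    ((interior_eq_empty_iff_dense_compl.mp hK).open_subset_closure_inter (h₁.1.inter h₂.1))
  rintro lam ⟨⟨hlam₁, hlam₂⟩, hlamK⟩
  rw [h₁.2.2 lam hlam₁ hlamK, h₂.2.2 lam hlam₂ hlamK]

theorem exists_differentiable_eqOn_resolvent [CompleteSpace E] (hK : interior K = ∅)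
    (hloc : ∀ ξ, ∃ U F, ξ ∈ U ∧ IsResolventExtension T K g U F) :
    ∃ G : ℂ → E, Differentiable ℂ G ∧
      EqOn G (fun lam => resolvent T lam g) (resolventSet ℂ T) := by
  choose U F hmem hext using hloc
  have hglue : ∀ ξ, EqOn (fun lam => F lam lam) (F ξ) (U ξ) := fun ξ lam hlam =>
    (hext lam).eqOn hK (hext ξ) ⟨hmem lam, hlam⟩
  refine ⟨fun lam => F lam lam, fun ξ => ?_, fun lam hlam =>
    (hext lam).eqOn hK (isResolventExtension_resolventSet T K g) ⟨hmem lam, hlam⟩⟩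
  exact ((hext ξ).2.1 ξ (hmem ξ)).differentiableAt.congr_of_eventuallyEq
    (eventuallyEq_of_mem ((hext ξ).1.mem_nhds (hmem ξ)) (hglue ξ))

/-- Liouville: `G` tends to `0` at infinity together with the resolvent, so `G = 0`. -/
theorem eq_zero_of_differentiable_eqOn_resolvent [CompleteSpace E] {G : ℂ → E}
    (hG : Differentiable ℂ G) (hGT : EqOn G (fun lam => resolvent T lam g) (resolventSet ℂ T)) :
    g = 0 := by
  have hρ : resolventSet ℂ T ∈ Bornology.cobounded ℂ := by
    simpa only [spectrum, compl_compl] using Bornology.isBounded_def.mp (spectrum.isBounded T)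
  have hlim : Tendsto G (cocompact ℂ) (𝓝 0) := by
    rw [← Metric.cobounded_eq_cocompact]
    refine Tendsto.congr' (eventuallyEq_of_mem hρ hGT).symm ?_
    simpa [Function.comp_def] using ((ContinuousLinearMap.apply ℂ E g).continuous.tendsto 0).comp
      (spectrum.resolvent_tendsto_cobounded T)
  obtain ⟨lam, hlam⟩ := Filter.nonempty_of_mem hρ
  have hres : resolvent T lam g = 0 :=
    (hGT hlam).symm.trans (hG.apply_eq_of_tendsto_cocompact lam hlim)
  have hinv : (algebraMap ℂ _ lam - T) * resolvent T lam = 1 := Ring.mul_inverse_cancel _ hlam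
  calc g = ((algebraMap ℂ _ lam - T) * resolvent T lam) g := by rw [hinv]; rfl
    _ = (algebraMap ℂ _ lam - T) (resolvent T lam g) := rfl
    _ = 0 := by rw [hres, map_zero]

theorem eq_zero_of_forall_isResolventExtension [CompleteSpace E] (hK : interior K = ∅)
    (hσ : spectrum ℂ T ⊆ K) (hext : ∀ ξ ∈ K, ∃ U F, ξ ∈ U ∧ IsResolventExtension T K g U F) :
    g = 0 := by
  obtain ⟨G, hG, hGT⟩ := exists_differentiable_eqOn_resolvent hK fun ξ => by
    by_cases hξ : ξ ∈ K
    · exact hext ξ hξ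
    · exact ⟨_, _, spectrum.notMem_iff.mp (fun hs => hξ (hσ hs)),
        isResolventExtension_resolventSet T K g⟩
  exact eq_zero_of_differentiable_eqOn_resolvent hG hGT

end ResolventExtension

theorem Commute.resolvent_right {R A : Type*} [CommSemiring R] [Ring A] [Algebra R A] {b c : A}
    (h : Commute c b) (r : R) : Commute c (resolvent b r) := by
  by_cases hunit : IsUnit (algebraMap R A r - b)
  · obtain ⟨u, hu⟩ := hunit
    rw [resolvent, ← hu, Ring.inverse_unit]
    exact (hu ▸ (Algebra.commute_algebraMap_right r c).sub_right h).units_inv_right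
  · rw [resolvent, Ring.inverse_non_unit _ hunit]
    exact Commute.zero_right c

theorem isResolventExtension_of_intertwining {E F : Type*} [NormedAddCommGroup E]
    [NormedSpace ℂ E] [NormedAddCommGroup F] [NormedSpace ℂ F] [CompleteSpace F]
    (J : F →L[ℂ] E) {A : E →L[ℂ] E} {b c : F →L[ℂ] F} {K : Set ℂ} (hσ : spectrum ℂ A ⊆ K)
    (hJ : ∀ y, J (c y) = A (J y)) (hcomm : Commute c b) {w : F} (hw : c w = b w) :
    IsResolventExtension A K (J w) (resolventSet ℂ b) (fun lam => J (resolvent b lam w)) := by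
  obtain ⟨hopen, hanalytic, -⟩ := isResolventExtension_resolventSet b K w
  refine ⟨hopen, J.comp_analyticOnNhd hanalytic, fun lam hlamb hlamK => ?_⟩
  have hlamA : lam ∈ resolventSet ℂ A := spectrum.notMem_iff.mp fun h => hlamK (hσ h)
  set y := resolvent b lam w
  have hy : lam • y - b y = w := congr($(Ring.mul_inverse_cancel _ hlamb) w)
  have hcy : c y = b y :=
    calc c y = resolvent b lam (c w) := congr($((hcomm.resolvent_right lam).eq) w)
      _ = resolvent b lam (b w) := by rw [hw]
      _ = b y := congr($(((Commute.refl b).resolvent_right lam).eq) w).symm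
  have hJy : (algebraMap ℂ _ lam - A) (J y) = J w := by
    rw [← hy]
    simp [← hJ, hcy]
  rw [← hJy]
  exact congr($(Ring.inverse_mul_cancel _ hlamA) (J y)).symm

theorem spectrum_subset_sphere_of_norm_le_one_s10 {E : Type*} [NormedAddCommGroup E]
    [NormedSpace ℂ E] [CompleteSpace E] (u : (E →L[ℂ] E)ˣ) (hu : ‖(u : E →L[ℂ] E)‖ ≤ 1)
    (hu' : ‖(↑u⁻¹ : E →L[ℂ] E)‖ ≤ 1) : spectrum ℂ (u : E →L[ℂ] E) ⊆ Metric.sphere 0 1 := by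
  intro k hk
  have hk0 : k ≠ 0 := fun h => spectrum.zero_notMem ℂ u.isUnit (h ▸ hk)
  have hk' : (↑(Units.mk0 k hk0)⁻¹ : ℂ) ∈ spectrum ℂ (↑u⁻¹ : E →L[ℂ] E) :=
    spectrum.inv_mem_iff.mp hk
  have h1 : ‖(1 : E →L[ℂ] E)‖ ≤ 1 := ContinuousLinearMap.norm_id_le
  have hle : ‖k‖ ≤ 1 :=
    (spectrum.norm_le_norm_mul_of_mem hk).trans (mul_le_one₀ hu (norm_nonneg _) h1)
  have hle' : ‖k⁻¹‖ ≤ 1 :=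
    (spectrum.norm_le_norm_mul_of_mem hk').trans (mul_le_one₀ hu' (norm_nonneg _) h1)
  rw [norm_inv, inv_le_one₀ (norm_pos_iff.mpr hk0)] at hle'
  exact mem_sphere_zero_iff_norm.mpr (le_antisymm hle hle')

section Translation

variable {E : Type*} [NormedAddCommGroup E] [NormedSpace ℂ E]

def shiftLinf (a : ℝ) : Linf E →L[ℂ] Linf E :=
  (Lp.compMeasurePreservingₗᵢ ℂ (fun t : ℝ => t + a)
    (measurePreserving_add_right volume a)).toContinuousLinearMap

theorem shiftLinf_shiftLinf (a b : ℝ) (g : Linf E) :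
    shiftLinf a (shiftLinf b g) = shiftLinf (a + b) g := by
  change Lp.compMeasurePreserving _ _ (Lp.compMeasurePreserving _ _ g) =
    Lp.compMeasurePreserving _ _ g
  rw [← Lp.compMeasurePreserving_comp_apply]
  congr 2
  funext t
  simp only [Function.comp_apply]
  ring

theorem shiftLinf_zero (g : Linf E) : shiftLinf 0 g = g := by
  change Lp.compMeasurePreserving _ _ g = g
  conv_rhs => rw [← Lp.compMeasurePreserving_id_apply g]
  congr 2
  funext t
  exact add_zero t

def transOpUnit : (Linf E →L[ℂ] Linf E)ˣ where
  val := transOp E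
  inv := shiftLinf (-1)
  val_inv := ContinuousLinearMap.ext fun g => by
    change shiftLinf 1 (shiftLinf (-1) g) = g
    rw [shiftLinf_shiftLinf, add_neg_cancel, shiftLinf_zero]
  inv_val := ContinuousLinearMap.ext fun g => by
    change shiftLinf (-1) (shiftLinf 1 g) = g
    rw [shiftLinf_shiftLinf, neg_add_cancel, shiftLinf_zero]

theorem spectrum_transOp_subset_sphere [CompleteSpace E] :
    spectrum ℂ (transOp E) ⊆ Metric.sphere 0 1 :=
  spectrum_subset_sphere_of_norm_le_one_s10 (transOpUnit (E := E))
    (LinearIsometry.norm_toContinuousLinearMap_le _)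
    (LinearIsometry.norm_toContinuousLinearMap_le _)

end Translation

theorem coeFn_bcToLinf {E : Type*} [NormedAddCommGroup E] (k : ℝ →ᵇ E) :
    bcToLinf E k =ᵐ[volume] k :=
  MemLp.coeFn_toLp _

theorem norm_bcToLinf_le {E : Type*} [NormedAddCommGroup E] (k : ℝ →ᵇ E) :
    ‖bcToLinf E k‖ ≤ ‖k‖ := by
  rw [Lp.norm_def, eLpNorm_congr_ae (coeFn_bcToLinf k), eLpNorm_exponent_top]
  exact ENNReal.toReal_le_of_le_ofReal (norm_nonneg k)
    (eLpNormEssSup_le_of_ae_bound (ae_of_all _ k.norm_coe_le_norm))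

section BoundedContinuous

variable {E : Type*} [NormedAddCommGroup E] [NormedSpace ℂ E]

def bcToLinfCLM : (ℝ →ᵇ E) →L[ℂ] Linf E :=
  LinearMap.mkContinuous
    { toFun := bcToLinf E
      map_add' _ _ := MemLp.toLp_add _ _
      map_smul' c _ := MemLp.toLp_const_smul c _ }
    1 fun k => (norm_bcToLinf_le k).trans_eq (one_mul _).symm

theorem bcToLinfCLM_apply (k : ℝ →ᵇ E) : bcToLinfCLM k = bcToLinf E k := rfl

theorem bcToLinfCLM_injective : Function.Injective (bcToLinfCLM (E := E)) := by
  intro k l hkl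
  have hae : ⇑k =ᵐ[volume] ⇑l := by
    have hl := coeFn_bcToLinf l
    rw [← bcToLinfCLM_apply, ← hkl, bcToLinfCLM_apply] at hl
    exact (coeFn_bcToLinf k).symm.trans hl
  exact DFunLike.coe_injective ((Continuous.ae_eq_iff_eq volume k.continuous l.continuous).mp hae)

theorem bcToLinfCLM_transBC (k : ℝ →ᵇ E) :
    bcToLinfCLM (transBC E k) = transOp E (bcToLinfCLM k) := rfl

theorem transBC_apply (k : ℝ →ᵇ E) (t : ℝ) : transBC E k t = k (t + 1) := rfl

theorem commute_transBC_of_periodic {B : ℝ → E →L[ℂ] E} (hBper : ∀ t, B (t + 1) = B t)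
    {𝓑 : (ℝ →ᵇ E) →L[ℂ] (ℝ →ᵇ E)} (h𝓑 : ∀ g t, 𝓑 g t = B t (g t)) :
    Commute (transBC E) 𝓑 :=
  ContinuousLinearMap.ext fun g => BoundedContinuousFunction.ext fun t => by
    change transBC E (𝓑 g) t = 𝓑 (transBC E g) t
    rw [transBC_apply, h𝓑, h𝓑, hBper, transBC_apply]

theorem transBC_sub_eq_of_solutions {B : ℝ → E →L[ℂ] E} (hBper : ∀ t, B (t + 1) = B t)
    {𝓑 : (ℝ →ᵇ E) →L[ℂ] (ℝ →ᵇ E)} (h𝓑 : ∀ g t, 𝓑 g t = B t (g t)) {f u v : ℝ →ᵇ E}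
    (hu : ∀ t, u t = B t (u (t - 1)) + f t) (hv : ∀ t, v t = B t (v (t - 1)) + f t) :
    transBC E (u - v) = 𝓑 (u - v) :=
  BoundedContinuousFunction.ext fun t => by
    rw [transBC_apply, h𝓑, coe_sub, Pi.sub_apply, Pi.sub_apply, hu, hv, hBper, add_sub_cancel_right,
      add_sub_add_right_eq_sub, map_sub]

end BoundedContinuous

theorem exists_isResolventExtension_of_notMem_circSpec {E : Type*} [NormedAddCommGroup E]
    [NormedSpace ℂ E] {g : Linf E} {ξ : ℂ} (hξ : ξ ∈ Metric.sphere 0 1)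
    (hξg : ξ ∉ circSpec E g) :
    ∃ U F, ξ ∈ U ∧ IsResolventExtension (transOp E) (Metric.sphere 0 1) g U F := by
  by_contra hne
  refine hξg ⟨mem_sphere_zero_iff_norm.mp hξ, fun ⟨U, F, hU, hξU, hF, hFg⟩ =>
    hne ⟨U, F, hξU, hU, hF, fun lam hlam hlamK => hFg lam hlam ?_⟩⟩
  exact mt mem_sphere_zero_iff_norm.mpr hlamK

theorem stmt10 (B : ℝ → X →L[ℂ] X) (hBper : ∀ t : ℝ, B (t + 1) = B t)
    (𝓑 : (ℝ →ᵇ X) →L[ℂ] (ℝ →ᵇ X)) (h𝓑 : ∀ (g : ℝ →ᵇ X) (t : ℝ), 𝓑 g t = B t (g t))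
    (f : ℝ →ᵇ X)
    (hsep : (spectrum ℂ 𝓑 ∩ Metric.sphere (0 : ℂ) 1) ∩ circSpec X (bcToLinf X f) = ∅)
    (u v : ℝ →ᵇ X)
    (hu : ∀ t : ℝ, u t = B t (u (t - 1)) + f t)
    (hv : ∀ t : ℝ, v t = B t (v (t - 1)) + f t)
    (huspec : circSpec X (bcToLinf X u) ⊆ circSpec X (bcToLinf X f))
    (hvspec : circSpec X (bcToLinf X v) ⊆ circSpec X (bcToLinf X f)) :
    u = v := by
  refine sub_eq_zero.mp (bcToLinfCLM_injective ?_)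
  rw [map_zero]
  refine eq_zero_of_forall_isResolventExtension (interior_sphere 0 one_ne_zero)
    spectrum_transOp_subset_sphere fun ξ hξ => ?_
  by_cases hξ𝓑 : ξ ∈ spectrum ℂ 𝓑
  · have hξf : ξ ∉ circSpec X (bcToLinf X f) := fun hξf =>
      Set.eq_empty_iff_forall_notMem.mp hsep ξ ⟨⟨hξ𝓑, hξ⟩, hξf⟩
    have hξu : ξ ∉ circSpec X (bcToLinf X u) := fun h => hξf (huspec h)
    have hξv : ξ ∉ circSpec X (bcToLinf X v) := fun h => hξf (hvspec h)
    obtain ⟨U₁, F₁, hξU₁, hext₁⟩ := exists_isResolventExtension_of_notMem_circSpec hξ hξu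
    obtain ⟨U₂, F₂, hξU₂, hext₂⟩ := exists_isResolventExtension_of_notMem_circSpec hξ hξv
    refine ⟨U₁ ∩ U₂, F₁ - F₂, ⟨hξU₁, hξU₂⟩, ?_⟩
    rw [map_sub]
    exact hext₁.sub hext₂
  · have hext := isResolventExtension_of_intertwining (K := Metric.sphere 0 1) bcToLinfCLM
      (spectrum_transOp_subset_sphere (E := X)) bcToLinfCLM_transBC
      (commute_transBC_of_periodic hBper h𝓑) (transBC_sub_eq_of_solutions hBper h𝓑 hu hv)
    exact ⟨_, _, spectrum.notMem_iff.mp hξ𝓑, hext⟩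
end
end

section
/- Let B : ℝ → L(X) be a family of bounded linear operators with B(t+1) = B(t) for all t and t ↦ B(t)x continuous for each x ∈ X, let 𝓑 denote the bounded operator of multiplication by B(t) on BC(ℝ,X), and let Λ be a closed subset of the unit circle Γ. Set Λ_{BC}(X) := { g ∈ BC(ℝ,X) : σ(g) ⊂ Λ }. Then 𝓑 leaves Λ_{BC}(X) invariant, and the spectrum of the restriction satisfies σ(𝓑|_{Λ_{BC}(X)}) ⊂ σ(𝓑), where σ(𝓑) is the spectrum of 𝓑 on BC(ℝ,X). -/
open MeasureTheory Complex Metric BoundedContinuousFunction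

noncomputable section

variable (X : Type*) [NormedAddCommGroup X] [NormedSpace ℂ X] [CompleteSpace X]

/-!
Multiplication by a 1-periodic strongly continuous family commutes with the translation `S` on
`L^∞(ℝ,X)`, hence with its resolvent, so it cannot enlarge the circular spectrum; this gives the
invariance of `Λ_{BC}(X)`. If `λ ∉ σ(𝓑)`, the inverse of `λ - 𝓑` is again a multiplication
operator, by `R(λ, B(t))`: each `λ - B(t)` is onto (test on constants) and one-to-one (otherwise
a bump concentrated where `(λ - B(·)) x` is small would violate the lower bound of `λ - 𝓑`).
Being periodic, this inverse also preserves `Λ_{BC}(X)` and restricts to the inverse of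
`λ - 𝓑|_{Λ_{BC}(X)}`.
-/

open Filter Topology
open Function (Periodic Injective)

theorem continuous_uncurry_apply_of_norm_le {α 𝕜 E F : Type*} [TopologicalSpace α]
    [NontriviallyNormedField 𝕜] [NormedAddCommGroup E] [NormedSpace 𝕜 E]
    [NormedAddCommGroup F] [NormedSpace 𝕜 F] {A : α → E →L[𝕜] F} {M : ℝ}
    (hA : ∀ x, Continuous fun a => A a x) (hM : ∀ a, ‖A a‖ ≤ M) :
    Continuous fun p : α × E => A p.1 p.2 := by
  refine continuous_iff_continuousAt.2 fun ⟨a₀, x₀⟩ => ?_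
  rw [ContinuousAt, tendsto_iff_norm_sub_tendsto_zero]
  have hlim : Tendsto (fun p : α × E => M * ‖p.2 - x₀‖ + ‖A p.1 x₀ - A a₀ x₀‖)
      (𝓝 (a₀, x₀)) (𝓝 0) := by
    have : Continuous fun p : α × E => M * ‖p.2 - x₀‖ + ‖A p.1 x₀ - A a₀ x₀‖ := by
      have := hA x₀
      fun_prop
    simpa using this.tendsto (a₀, x₀)
  refine squeeze_zero (fun _ => norm_nonneg _) (fun p => ?_) hlim
  calc ‖A p.1 p.2 - A a₀ x₀‖ = ‖A p.1 (p.2 - x₀) + (A p.1 x₀ - A a₀ x₀)‖ := by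
        rw [map_sub, sub_add_sub_cancel]
    _ ≤ M * ‖p.2 - x₀‖ + ‖A p.1 x₀ - A a₀ x₀‖ :=
        (norm_add_le _ _).trans (add_le_add_left ((A p.1).le_of_opNorm_le (hM p.1) _) _)

theorem Commute.ringInverse_right {M₀ : Type*} [MonoidWithZero M₀] {a b : M₀}
    (h : Commute a b) : Commute a (Ring.inverse b) := by
  by_cases hb : IsUnit b
  · obtain ⟨u, rfl⟩ := hb
    rw [Ring.inverse_unit]
    exact h.units_inv_right
  · rw [Ring.inverse_non_unit _ hb]
    exact Commute.zero_right _

section CircularSpectrum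

theorem bcToLinf_coeFn {E : Type*} [NormedAddCommGroup E] (g : ℝ →ᵇ E) :
    bcToLinf E g =ᵐ[volume] g :=
  MemLp.coeFn_toLp _

theorem bcToLinf_add {E : Type*} [NormedAddCommGroup E] (g h : ℝ →ᵇ E) :
    bcToLinf E (g + h) = bcToLinf E g + bcToLinf E h :=
  MemLp.toLp_add _ _

variable {E : Type*} [NormedAddCommGroup E] [NormedSpace ℂ E]

theorem bcToLinf_smul (c : ℂ) (g : ℝ →ᵇ E) : bcToLinf E (c • g) = c • bcToLinf E g :=
  MemLp.toLp_const_smul c _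

theorem memLp_top_apply {A : ℝ → E →L[ℂ] E} (hA : ∀ x, Continuous fun t => A t x) {M : ℝ}
    (hM : ∀ t, ‖A t‖ ≤ M) (f : Linf E) : MemLp (fun t => A t (f t)) ⊤ volume :=
  (Lp.memLp f).of_le_mul
    ((continuous_uncurry_apply_of_norm_le hA hM).comp_aestronglyMeasurable
      (aestronglyMeasurable_id.prodMk (Lp.aestronglyMeasurable f)))
    (ae_of_all _ fun t => (A t).le_of_opNorm_le (hM t) _)

def mulLinf (A : ℝ → E →L[ℂ] E) (hA : ∀ x, Continuous fun t => A t x) {M : ℝ}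
    (hM : ∀ t, ‖A t‖ ≤ M) : Linf E →L[ℂ] Linf E :=
  LinearMap.mkContinuous
    { toFun := fun f => (memLp_top_apply hA hM f).toLp
      map_add' := fun f g => by
        rw [← MemLp.toLp_add]
        exact MemLp.toLp_congr _ _ ((Lp.coeFn_add f g).mono fun t ht => by
          simp only [ht, Pi.add_apply, map_add])
      map_smul' := fun c f => by
        rw [RingHom.id_apply, ← MemLp.toLp_const_smul]
        exact MemLp.toLp_congr _ _ ((Lp.coeFn_smul c f).mono fun t ht => by
          simp only [ht, Pi.smul_apply, map_smul]) }
    M fun f => Lp.norm_le_mul_norm_of_ae_le_mul <|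
      (MemLp.coeFn_toLp (memLp_top_apply hA hM f)).mono fun t ht => by
        simp only [LinearMap.coe_mk, AddHom.coe_mk]
        rw [ht]
        exact (A t).le_of_opNorm_le (hM t) (f t)

theorem mulLinf_coeFn {A : ℝ → E →L[ℂ] E} (hA : ∀ x, Continuous fun t => A t x) {M : ℝ}
    (hM : ∀ t, ‖A t‖ ≤ M) (f : Linf E) :
    mulLinf A hA hM f =ᵐ[volume] fun t => A t (f t) :=
  MemLp.coeFn_toLp (memLp_top_apply hA hM f)

theorem transOp_coeFn (f : Linf E) : transOp E f =ᵐ[volume] fun t => f (t + 1) :=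
  Lp.coeFn_compMeasurePreserving f _

theorem mulLinf_commute_transOp {A : ℝ → E →L[ℂ] E} (hA : ∀ x, Continuous fun t => A t x)
    {M : ℝ} (hM : ∀ t, ‖A t‖ ≤ M) (hper : Periodic A 1) :
    Commute (mulLinf A hA hM) (transOp E) := by
  ext1 f
  refine Lp.ext ?_
  have hshift := (measurePreserving_add_right volume (1 : ℝ)).quasiMeasurePreserving
  filter_upwards [mulLinf_coeFn hA hM (transOp E f), transOp_coeFn f,
    transOp_coeFn (mulLinf A hA hM f), hshift.ae_eq_comp (mulLinf_coeFn hA hM f)]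
    with t h₁ h₂ h₃ h₄
  simp only [Function.comp_apply] at h₄
  simp only [mul_apply_eq_comp, h₁, h₂, h₃, h₄, hper t]

theorem circSpec_map_subset (𝒜 : Linf E →L[ℂ] Linf E) (h : Commute 𝒜 (transOp E)) (f : Linf E) :
    circSpec E (𝒜 f) ⊆ circSpec E f := by
  rintro ξ ⟨hξ, hsing⟩
  refine ⟨hξ, fun ⟨U, F, hU, hξU, hF, hFeq⟩ => hsing ⟨U, 𝒜 ∘ F, hU, hξU,
    fun z hz => (𝒜.analyticAt _).comp (hF z hz), fun z hz hz1 => ?_⟩⟩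
  have hcomm : Commute 𝒜 (resolvent (transOp E) z) :=
    ((Algebra.commute_algebraMap_right z 𝒜).sub_right h).ringInverse_right
  rw [Function.comp_apply, hFeq z hz hz1, ← mul_apply_eq_comp, hcomm.eq, mul_apply_eq_comp]

theorem circSpec_zero : circSpec E 0 = ∅ :=
  Set.eq_empty_of_forall_notMem fun _ ⟨_, hsing⟩ => hsing
    ⟨Set.univ, 0, isOpen_univ, trivial, analyticOnNhd_const, fun _ _ _ => (map_zero _).symm⟩

theorem circSpec_add (f g : Linf E) : circSpec E (f + g) ⊆ circSpec E f ∪ circSpec E g := by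
  rintro ξ ⟨hξ, hsing⟩
  by_contra hfg
  simp only [Set.mem_union, circSpec, Set.mem_ofPred_eq, hξ, true_and, not_or, not_not] at hfg
  obtain ⟨⟨U, F, hU, hξU, hF, hFeq⟩, ⟨V, G, hV, hξV, hG, hGeq⟩⟩ := hfg
  exact hsing ⟨U ∩ V, F + G, hU.inter hV, ⟨hξU, hξV⟩,
    fun z hz => (hF z hz.1).add (hG z hz.2),
    fun z hz hz1 => by rw [Pi.add_apply, hFeq z hz.1 hz1, hGeq z hz.2 hz1, map_add]⟩

theorem circSpec_smul (c : ℂ) (f : Linf E) : circSpec E (c • f) ⊆ circSpec E f :=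
  circSpec_map_subset (c • 1) ((Commute.one_left _).smul_left c) f

/-- The space `Λ_{BC}(E)` of the paper. -/
def circSpecSubmodule (Λ : Set ℂ) : Submodule ℂ (ℝ →ᵇ E) where
  carrier := {g | circSpec E (bcToLinf E g) ⊆ Λ}
  add_mem' {g h} hg hh := by
    simp only [Set.mem_ofPred_eq, bcToLinf_add] at hg hh ⊢
    exact (circSpec_add _ _).trans (Set.union_subset hg hh)
  zero_mem' := by
    simp only [Set.mem_ofPred_eq]
    rw [← zero_smul ℂ (0 : ℝ →ᵇ E), bcToLinf_smul, zero_smul, circSpec_zero]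
    exact Set.empty_subset Λ
  smul_mem' c g hg := by
    simp only [Set.mem_ofPred_eq, bcToLinf_smul] at hg ⊢
    exact (circSpec_smul c _).trans hg

end CircularSpectrum

section MulBC

variable {E : Type*} [NormedAddCommGroup E] [NormedSpace ℂ E]
  {T : (ℝ →ᵇ E) →L[ℂ] (ℝ →ᵇ E)} {A : ℝ → E →L[ℂ] E}

theorem apply_eq_apply_const_of_mul (hT : ∀ g t, T g t = A t (g t)) (t : ℝ) (x : E) :
    A t x = T (const ℝ x) t := by
  rw [hT, BoundedContinuousFunction.const_apply]

theorem continuous_apply_of_mul (hT : ∀ g t, T g t = A t (g t)) (x : E) :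
    Continuous fun t => A t x := by
  simpa only [apply_eq_apply_const_of_mul hT] using (T (const ℝ x)).continuous

theorem norm_le_of_mul (hT : ∀ g t, T g t = A t (g t)) (t : ℝ) : ‖A t‖ ≤ ‖T‖ :=
  ContinuousLinearMap.opNorm_le_bound _ (norm_nonneg _) fun x => calc
    ‖A t x‖ = ‖T (const ℝ x) t‖ := by rw [apply_eq_apply_const_of_mul hT]
    _ ≤ ‖T (const ℝ x)‖ := norm_coe_le_norm _ _
    _ ≤ ‖T‖ * ‖const ℝ x‖ := T.le_opNorm _
    _ ≤ ‖T‖ * ‖x‖ := by gcongr; exact norm_const_le x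

theorem mulLinf_bcToLinf (hT : ∀ g t, T g t = A t (g t)) (g : ℝ →ᵇ E) :
    mulLinf A (continuous_apply_of_mul hT) (norm_le_of_mul hT) (bcToLinf E g) =
      bcToLinf E (T g) := by
  refine Lp.ext ?_
  filter_upwards [mulLinf_coeFn (continuous_apply_of_mul hT) (norm_le_of_mul hT) (bcToLinf E g),
    bcToLinf_coeFn g, bcToLinf_coeFn (T g)] with t h₁ h₂ h₃
  rw [h₁, h₂, h₃, hT]

theorem circSpec_bcToLinf_mul_subset (hT : ∀ g t, T g t = A t (g t)) (hA : Periodic A 1)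
    (g : ℝ →ᵇ E) : circSpec E (bcToLinf E (T g)) ⊆ circSpec E (bcToLinf E g) := by
  rw [← mulLinf_bcToLinf hT]
  exact circSpec_map_subset _ (mulLinf_commute_transOp _ _ hA) _

end MulBC

section Inverse

variable {E : Type*} [NormedAddCommGroup E] [NormedSpace ℂ E]

theorem exists_apply_eq_and_norm_apply_le {A : ℝ → E →L[ℂ] E}
    (hA : ∀ x, Continuous fun t => A t x) {t₀ : ℝ} {x : E} (hx : A t₀ x = 0) {ε : ℝ}
    (hε : 0 < ε) : ∃ g : ℝ →ᵇ E, g t₀ = x ∧ ∀ t, ‖A t (g t)‖ ≤ ε := by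
  obtain ⟨δ, hδ, hnear⟩ := Metric.continuous_iff.1 (hA x) t₀ ε hε
  obtain ⟨φ, hφ_out, hφ_t₀, hφ⟩ := exists_bounded_zero_one_of_closed
    Metric.isOpen_ball.isClosed_compl (isClosed_singleton (x := t₀))
    (Set.disjoint_singleton_right.2 (not_not.2 (Metric.mem_ball_self hδ)))
  let g : ℝ →ᵇ E := ofNormedAddCommGroup (fun t => (φ t : ℂ) • x) (by fun_prop) ‖x‖
    fun t => by
      rw [norm_smul, Complex.norm_real, Real.norm_eq_abs, abs_of_nonneg (hφ t).1]
      exact mul_le_of_le_one_left (norm_nonneg x) (hφ t).2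
  refine ⟨g, by simp [g, hφ_t₀ rfl], fun t => ?_⟩
  change ‖A t ((φ t : ℂ) • x)‖ ≤ ε
  rw [map_smul, norm_smul, Complex.norm_real, Real.norm_eq_abs, abs_of_nonneg (hφ t).1]
  by_cases ht : t ∈ Metric.ball t₀ δ
  · have := hnear t ht
    rw [hx, dist_zero_right] at this
    nlinarith [(hφ t).1, (hφ t).2, norm_nonneg (A t x)]
  · simp [hφ_out ht, hε.le]

variable {T : (ℝ →ᵇ E) →L[ℂ] (ℝ →ᵇ E)} {A : ℝ → E →L[ℂ] E}

theorem injective_of_isUnit_of_mul (hT : ∀ g t, T g t = A t (g t)) (hu : IsUnit T) (t₀ : ℝ) :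
    Injective (A t₀) := by
  rw [injective_iff_map_eq_zero]
  intro x hx
  set K := ‖Ring.inverse T‖
  have hbelow (g : ℝ →ᵇ E) : ‖g‖ ≤ K * ‖T g‖ := by
    simpa [← mul_apply_eq_comp, Ring.inverse_mul_cancel T hu] using
      (Ring.inverse T).le_opNorm (T g)
  refine norm_le_zero_iff.1 (le_of_forall_pos_le_add fun ε hε => ?_)
  obtain ⟨g, hg₀, hg⟩ := exists_apply_eq_and_norm_apply_le (continuous_apply_of_mul hT) hx
    (div_pos hε (by positivity : 0 < K + 1))
  calc ‖x‖ = ‖g t₀‖ := by rw [hg₀]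
    _ ≤ ‖g‖ := norm_coe_le_norm _ _
    _ ≤ K * ‖T g‖ := hbelow g
    _ ≤ K * (ε / (K + 1)) := by
        gcongr
        exact (norm_le (by positivity)).2 fun t => (hT g t).symm ▸ hg t
    _ ≤ 0 + ε := by
        rw [zero_add, ← mul_div_assoc, div_le_iff₀ (by positivity)]
        nlinarith

end Inverse

section Resolvent

variable {X} {T : (ℝ →ᵇ X) →L[ℂ] (ℝ →ᵇ X)} {A : ℝ → X →L[ℂ] X}

theorem isUnit_of_isUnit_of_mul (hT : ∀ g t, T g t = A t (g t)) (hu : IsUnit T) (t : ℝ) :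
    IsUnit (A t) := by
  refine ContinuousLinearMap.isUnit_iff_bijective.2
    ⟨injective_of_isUnit_of_mul hT hu t, fun x => ⟨Ring.inverse T (const ℝ x) t, ?_⟩⟩
  rw [← hT, ← mul_apply_eq_comp, Ring.mul_inverse_cancel T hu, one_apply_eq_self,
    BoundedContinuousFunction.const_apply]

theorem ringInverse_apply_of_mul (hT : ∀ g t, T g t = A t (g t)) (hu : IsUnit T)
    (g : ℝ →ᵇ X) (t : ℝ) : Ring.inverse T g t = Ring.inverse (A t) (g t) := by
  have hAt := Ring.inverse_mul_cancel _ (isUnit_of_isUnit_of_mul hT hu t)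
  calc Ring.inverse T g t = (Ring.inverse (A t) * A t) (Ring.inverse T g t) := by
        rw [hAt, one_apply_eq_self]
    _ = Ring.inverse (A t) ((T * Ring.inverse T) g t) := by
        rw [mul_apply_eq_comp, mul_apply_eq_comp, hT]
    _ = Ring.inverse (A t) (g t) := by rw [Ring.mul_inverse_cancel T hu, one_apply_eq_self]

theorem resolvent_apply_of_mul (hT : ∀ g t, T g t = A t (g t)) {z : ℂ} (hz : z ∉ spectrum ℂ T)
    (g : ℝ →ᵇ X) (t : ℝ) : resolvent T z g t = resolvent (A t) z (g t) :=
  ringInverse_apply_of_mul (A := fun t => algebraMap ℂ _ z - A t)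
    (fun g t => by simp [Algebra.algebraMap_eq_smul_one, hT])
    (spectrum.notMem_iff.1 hz) g t

end Resolvent

theorem spectrum_restrictCLM_subset {E : Type*} [NormedAddCommGroup E] [NormedSpace ℂ E]
    (f : E →L[ℂ] E) (p : Submodule ℂ E) (hf : ∀ x ∈ p, f x ∈ p)
    (hres : ∀ z ∉ spectrum ℂ f, ∀ x ∈ p, resolvent f z x ∈ p) :
    spectrum ℂ (restrictCLM f p hf) ⊆ spectrum ℂ f := by
  intro z hz
  by_contra hzf
  have hu := spectrum.notMem_iff.1 hzf
  refine hz ⟨⟨_, restrictCLM _ p (hres z hzf), ?_, ?_⟩, rfl⟩ <;> ext x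
  · simpa [restrictCLM, resolvent, Algebra.algebraMap_eq_smul_one] using
      DFunLike.congr_fun (Ring.mul_inverse_cancel _ hu) (x : E)
  · simpa [restrictCLM, resolvent, Algebra.algebraMap_eq_smul_one] using
      DFunLike.congr_fun (Ring.inverse_mul_cancel _ hu) (x : E)

theorem stmt12 (B : ℝ → X →L[ℂ] X) (hBper : ∀ t : ℝ, B (t + 1) = B t)
    (𝓑 : (ℝ →ᵇ X) →L[ℂ] (ℝ →ᵇ X)) (h𝓑 : ∀ (g : ℝ →ᵇ X) (t : ℝ), 𝓑 g t = B t (g t))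
    (Λ : Set ℂ) :
    ∃ p : Submodule ℂ (ℝ →ᵇ X),
      (p : Set (ℝ →ᵇ X)) = {g : ℝ →ᵇ X | circSpec X (bcToLinf X g) ⊆ Λ} ∧
      ∃ hinv : ∀ g ∈ p, 𝓑 g ∈ p,
        spectrum ℂ (restrictCLM 𝓑 p hinv) ⊆ spectrum ℂ 𝓑 := by
  have hinv (g) (hg : g ∈ circSpecSubmodule Λ) : 𝓑 g ∈ circSpecSubmodule Λ :=
    (circSpec_bcToLinf_mul_subset h𝓑 hBper g).trans hg
  refine ⟨circSpecSubmodule Λ, rfl, hinv, spectrum_restrictCLM_subset 𝓑 _ hinv ?_⟩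
  intro z hz g hg
  have hper : Periodic (fun t => resolvent (B t) z) 1 := fun t => by simp only [hBper]
  exact (circSpec_bcToLinf_mul_subset (resolvent_apply_of_mul h𝓑 hz) hper g).trans hg

end
end
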